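/- Let ω = exp(2πi/3). For every α ∈ ℂ, h_0((2 + ω)·α) + h_0((2 + ω²)·α) = 3·h_0(α)·h_0(−α) − 1; moreover h_0((1 + ω)·α) = h_0((1 + ω²)·α) = h_0(−α). (Identities 5 and 6 relating the constrained variables x, x*, x** of the Tchebycheff 3-polynomial system.) -/
import Mathlib

open Complex Finset

/-- `ω = exp(2πi/3)`, the primitive cube root of unity. -/
noncomputable def om3 : ℂ := Complex.exp (2 * Real.pi * Complex.I / 3)

/-- The third-order hyperbolic function
`h_k(z) = (1/3) · Σ_{s=0}^{2} ω^{−k·s} · exp(ω^s · z)`. -/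
noncomputable def hfun3 (k : ℕ) (z : ℂ) : ℂ :=
  (1 / (3 : ℂ)) * ∑ s ∈ Finset.range 3, om3 ^ (-((k * s : ℕ) : ℤ)) * Complex.exp (om3 ^ s * z)

lemma om3_prim : IsPrimitiveRoot om3 3 := by
  simpa [om3] using Complex.isPrimitiveRoot_exp 3 (by norm_num)

lemma om3_cube : om3 ^ 3 = 1 := om3_prim.pow_eq_one

lemma om3_sum : 1 + om3 + om3 ^ 2 = 0 := by
  have hne : om3 - 1 ≠ 0 := sub_ne_zero.mpr (om3_prim.ne_one (by norm_num))
  have h : (om3 - 1) * (1 + om3 + om3 ^ 2) = 0 := by linear_combination om3_cube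
  rcases mul_eq_zero.mp h with h' | h'
  · exact absurd h' hne
  · exact h'

lemma hfun3_zero (z : ℂ) : hfun3 0 z =
    (1 / 3) * (Complex.exp z + Complex.exp (om3 * z) + Complex.exp (om3 ^ 2 * z)) := by
  simp [hfun3, Finset.sum_range_succ]

lemma exp3_mul (a b c d e f : ℂ) :
    (Complex.exp a + Complex.exp b + Complex.exp c) *
      (Complex.exp d + Complex.exp e + Complex.exp f) =
    Complex.exp (a + d) + Complex.exp (a + e) + Complex.exp (a + f) +
    Complex.exp (b + d) + Complex.exp (b + e) + Complex.exp (b + f) +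
    Complex.exp (c + d) + Complex.exp (c + e) + Complex.exp (c + f) := by
  simp only [add_mul, mul_add, ← Complex.exp_add]
  ring

/-- Identities relating the constrained variables `x, x*, x**`:
`h_0((2+ω)α) + h_0((2+ω²)α) = 3·h_0(α)·h_0(−α) − 1` and
`h_0((1+ω)α) = h_0((1+ω²)α) = h_0(−α)`. -/
theorem constrained_variable_identities (α : ℂ) :
    hfun3 0 ((2 + om3) * α) + hfun3 0 ((2 + om3 ^ 2) * α) = 3 * hfun3 0 α * hfun3 0 (-α) - 1 ∧
    hfun3 0 ((1 + om3) * α) = hfun3 0 (-α) ∧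
    hfun3 0 ((1 + om3 ^ 2) * α) = hfun3 0 (-α) := by
  have hw3 := om3_cube
  have hs := om3_sum
  refine ⟨?_, ?_, ?_⟩
  · have hAB := exp3_mul α (om3 * α) (om3 ^ 2 * α) (-α) (om3 * -α) (om3 ^ 2 * -α)
    rw [show α + -α = 0 from by ring,
      show α + om3 * -α = (1 - om3) * α from by ring,
      show α + om3 ^ 2 * -α = (2 + om3) * α from by linear_combination (-α) * hs,
      show om3 * α + -α = (om3 - 1) * α from by ring,
      show om3 * α + om3 * -α = 0 from by ring,
      show om3 * α + om3 ^ 2 * -α = (1 + 2 * om3) * α from by linear_combination (-α) * hs,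
      show om3 ^ 2 * α + -α = (-2 - om3) * α from by linear_combination α * hs,
      show om3 ^ 2 * α + om3 * -α = (-1 - 2 * om3) * α from by linear_combination α * hs,
      show om3 ^ 2 * α + om3 ^ 2 * -α = 0 from by ring,
      Complex.exp_zero] at hAB
    rw [hfun3_zero, hfun3_zero, hfun3_zero, hfun3_zero,
      show om3 * ((2 + om3) * α) = (om3 - 1) * α from by linear_combination α * hs,
      show om3 ^ 2 * ((2 + om3) * α) = (-1 - 2 * om3) * α from by
        linear_combination 2 * α * hs + α * hw3,
      show om3 * ((2 + om3 ^ 2) * α) = (1 + 2 * om3) * α from by linear_combination α * hw3,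
      show om3 ^ 2 * ((2 + om3 ^ 2) * α) = (-2 - om3) * α from by
        linear_combination 2 * α * hs + om3 * α * hw3,
      show (2 + om3 ^ 2) * α = (1 - om3) * α from by linear_combination α * hs]
    linear_combination (-(1 / 3) : ℂ) * hAB
  · rw [hfun3_zero, hfun3_zero,
      show om3 * ((1 + om3) * α) = -α from by linear_combination α * hs,
      show om3 ^ 2 * ((1 + om3) * α) = om3 * -α from by linear_combination α * hs + α * hw3,
      show (1 + om3) * α = om3 ^ 2 * -α from by linear_combination α * hs]
    ring
  · rw [hfun3_zero, hfun3_zero,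
      show om3 * ((1 + om3 ^ 2) * α) = om3 ^ 2 * -α from by
        linear_combination α * hs + α * hw3,
      show om3 ^ 2 * ((1 + om3 ^ 2) * α) = -α from by
        linear_combination α * hs + om3 * α * hw3,
      show (1 + om3 ^ 2) * α = om3 * -α from by linear_combination α * hs]
    ring
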